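/- arXiv:1902.06808 — 4 statements merged into one kernel-verified Lean document; each statement's English description precedes it below -/
import Mathlib

section
/- Let n = 2^{k+1} with k ≥ 1. Any Hamiltonian cycle on Z_n using only steps of ±1 and n/2 must use at least 2^k − 1 steps of +1 and at least 2^k − 1 steps of −1, unless it uses only +1 steps or only −1 steps (in which case it uses n of them). Consequently, if edges of length 1 have cost 1 and edges of length n/2 have cost 0, every Hamiltonian cycle on Z_n using only these edges costs at least 2^{k+1} − 2. -/
/-
Write `n = 2M` with `M = 2^k`, and let `s₁, s₂, s₃` count the steps `+1, -1, M`. Summing the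
steps around the cycle gives `2M ∣ s₁ - s₂ + s₃ M`; as `M` is even and `s₁ + s₂ + s₃ = 2M`,
`s₃` is even, so `2M ∣ s₁ - s₂`: either every step is `+1`, every step is `-1`, or `s₁ = s₂`.
In the balanced case reduce mod `M`: the `M`-steps vanish and the `±1`-steps lift to a closed
walk on `ℤ` of total variation `s₁ + s₂` whose residues cover `ZMod M`. Its range therefore
contains at least `M` integers, and going from its minimum to its maximum and back costs at
least `2(M - 1)`.
-/

open Finset

theorem sum_comp_eq_of_mem_three {ι R S : Type*} [Fintype ι] [DecidableEq R] [AddCommMonoid S]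
    {f : ι → R} {x y z : R} (hxy : x ≠ y) (hxz : x ≠ z) (hyz : y ≠ z)
    (hf : ∀ i, f i = x ∨ f i = y ∨ f i = z) (g : R → S) :
    ∑ i, g (f i) = #{i | f i = x} • g x + #{i | f i = y} • g y + #{i | f i = z} • g z := by
  have hfiber : ∀ b, ∑ i with f i = b, g (f i) = #{i | f i = b} • g b := fun b => by
    rw [← sum_const]
    exact sum_congr rfl fun i hi => by rw [(mem_filter.1 hi).2]
  rw [← sum_fiberwise_of_maps_to (t := {x, y, z}) (g := f) (by simpa using hf),
    sum_insert (by simp [hxy, hxz]), sum_pair hyz, hfiber, hfiber, hfiber, add_assoc]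

namespace ZMod

theorem sum_add_one_sub_eq_zero {n : ℕ} [NeZero n] {G : Type*} [AddCommGroup G]
    (v : ZMod n → G) : ∑ i, (v (i + 1) - v i) = 0 := by
  rw [sum_sub_distrib, sub_eq_zero]
  exact Fintype.sum_equiv (Equiv.addRight 1) _ _ fun _ => rfl

theorem sum_range_natCast {n : ℕ} [NeZero n] {S : Type*} [AddCommMonoid S] (f : ZMod n → S) :
    ∑ l ∈ range n, f l = ∑ i, f i :=
  sum_nbij' (fun l => (l : ZMod n)) ZMod.val (by simp) (by simp [ZMod.val_lt])
    (fun l hl => by simp [ZMod.val_natCast, Nat.mod_eq_of_lt (mem_range.1 hl)]) (by simp)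
    (by simp)

theorem one_ne_neg_one_ne_half {M : ℕ} (hM : 2 ≤ M) :
    (1 : ZMod (2 * M)) ≠ -1 ∧ (1 : ZMod (2 * M)) ≠ M ∧ (-1 : ZMod (2 * M)) ≠ M := by
  have hcast : ∀ a : ℕ, 0 < a → a < 2 * M → (a : ZMod (2 * M)) ≠ 0 := fun a h0 h => by
    rw [Ne, ZMod.natCast_eq_zero_iff]
    exact Nat.not_dvd_of_pos_of_lt h0 h
  have hM0 : ((2 * M : ℕ) : ZMod (2 * M)) = 0 := ZMod.natCast_self _
  push_cast at hM0
  refine ⟨fun h => hcast 2 two_pos (by omega) ?_, fun h => hcast (M + 1) (by omega) (by omega) ?_,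
    fun h => hcast (M + 1) (by omega) (by omega) ?_⟩
  · push_cast
    linear_combination h
  · push_cast
    linear_combination hM0 + h
  · push_cast
    linear_combination -h

end ZMod

section IntegerWalk

variable (W : ℕ → ℤ)

theorem abs_sub_le_sum_abs_Ico {a b : ℕ} (hab : a ≤ b) :
    |W b - W a| ≤ ∑ j ∈ Ico a b, |W (j + 1) - W j| := by
  rw [← sum_Ico_sub W hab]
  exact abs_sum_le_sum_abs _ _

theorem two_mul_abs_sub_le_sum_abs_of_closed {N a b : ℕ} (hclosed : W N = W 0) (ha : a ≤ N)
    (hb : b ≤ N) : 2 * |W b - W a| ≤ ∑ j ∈ range N, |W (j + 1) - W j| := by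
  wlog hab : a ≤ b generalizing a b
  · rw [abs_sub_comm]
    exact this hb ha (by omega)
  have h0a := abs_sub_le_sum_abs_Ico W (Nat.zero_le a)
  have hab' := abs_sub_le_sum_abs_Ico W hab
  have hbN := abs_sub_le_sum_abs_Ico W hb
  rw [Nat.Ico_zero_eq_range] at h0a
  rw [hclosed, abs_sub_comm] at hbN
  rw [← sum_range_add_sum_Ico _ hb, ← sum_range_add_sum_Ico _ hab]
  have htri := abs_sub_le (W b) (W 0) (W a)
  rw [abs_sub_comm (W 0)] at htri
  linarith

theorem two_mul_sub_one_le_sum_abs_of_closed {m N : ℕ} [NeZero m] (hclosed : W N = W 0)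
    (hcover : ∀ r : ZMod m, ∃ j < N, (W j : ZMod m) = r) :
    2 * ((m : ℤ) - 1) ≤ ∑ j ∈ range N, |W (j + 1) - W j| := by
  set S := (range N).image W
  have hS : S.Nonempty := by
    obtain ⟨j, hj, -⟩ := hcover 0
    exact ⟨W j, mem_image_of_mem W (mem_range.2 hj)⟩
  have hmS : m ≤ #S := by
    simpa [ZMod.card] using card_le_card_of_surjOn (s := S) (t := univ) (fun z : ℤ => (z : ZMod m))
      fun r _ => by
        obtain ⟨j, hj, rfl⟩ := hcover r
        exact ⟨W j, mem_image_of_mem W (mem_range.2 hj), rfl⟩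
  have hSIcc : #S ≤ (S.max' hS + 1 - S.min' hS).toNat := by
    rw [← Int.card_Icc]
    exact card_le_card fun z hz => mem_Icc.2 ⟨min'_le _ _ hz, le_max' _ _ hz⟩
  obtain ⟨a, ha, hWa⟩ := mem_image.1 (S.min'_mem hS)
  obtain ⟨b, hb, hWb⟩ := mem_image.1 (S.max'_mem hS)
  have hwalk := two_mul_abs_sub_le_sum_abs_of_closed W hclosed
    (mem_range.1 ha).le (mem_range.1 hb).le
  have hle := S.min'_le_max' hS
  rw [hWa, hWb, abs_of_nonneg (sub_nonneg.2 hle)] at hwalk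
  omega

end IntegerWalk

theorem ZMod.two_mul_sub_one_le_sum_abs {n m : ℕ} [NeZero n] [NeZero m] {w : ZMod n → ZMod m}
    (hw : Function.Surjective w) {e : ZMod n → ℤ} (hstep : ∀ i, w (i + 1) = w i + e i)
    (hsum : ∑ i, e i = 0) : 2 * ((m : ℤ) - 1) ≤ ∑ i, |e i| := by
  set W : ℕ → ℤ := fun j => ∑ l ∈ range j, e l
  have hW : ∀ j : ℕ, w j = w 0 + W j := by
    intro j
    induction j with
    | zero => simp [W]
    | succ j ih =>
      simp only [W, sum_range_succ, Nat.cast_succ, hstep, ih]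
      push_cast
      ring
  have hclosed : W n = W 0 := by simp [W, sum_range_natCast, hsum]
  have hcover : ∀ r : ZMod m, ∃ j < n, (W j : ZMod m) = r := by
    intro r
    obtain ⟨i, hi⟩ := hw (w 0 + r)
    refine ⟨i.val, ZMod.val_lt i, ?_⟩
    have hWi := hW i.val
    rw [ZMod.natCast_zmod_val, hi] at hWi
    linear_combination -hWi
  have hwalk := two_mul_sub_one_le_sum_abs_of_closed W hclosed hcover
  simp only [W, sum_range_succ, add_sub_cancel_left] at hwalk
  rwa [sum_range_natCast fun i => |e i|] at hwalk

theorem sub_eq_or_sub_eq_or_eq_of_two_mul_dvd {a b c M : ℤ} (hM : Even M) (ha : 0 ≤ a)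
    (hb : 0 ≤ b) (hc : 0 ≤ c) (hsum : a + b + c = 2 * M) (hdvd : 2 * M ∣ a - b + c * M) :
    a - b = 2 * M ∨ b - a = 2 * M ∨ a = b := by
  obtain ⟨t, rfl⟩ := hM
  obtain ⟨q, hq⟩ := hdvd
  have hc2 : Even c := by
    have h : a - b = 2 * (2 * t * q - c * t) := by linear_combination hq
    generalize 2 * t * q - c * t = X at h
    rw [Int.even_iff]
    omega
  obtain ⟨u, rfl⟩ := hc2
  have hd : a - b = 4 * t * (q - u) := by linear_combination hq
  generalize q - u = d at hd
  rcases lt_trichotomy d 0 with hd0 | rfl | hd0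
  · right; left; nlinarith
  · right; right; linarith
  · left; nlinarith

def stepCount {n : ℕ} [NeZero n] (v : ZMod n → ZMod n) (d : ZMod n) : ℕ :=
  #{i | v (i + 1) - v i = d}

section HalfStepWalk

variable {M : ℕ} [NeZero (2 * M)] {v : ZMod (2 * M) → ZMod (2 * M)}

theorem stepCount_eq_or_eq_or_eq (hM : 2 ≤ M) (hMeven : Even M)
    (hv : ∀ i, v (i + 1) - v i = 1 ∨ v (i + 1) - v i = -1 ∨ v (i + 1) - v i = M) :
    (stepCount v 1 = 2 * M ∧ stepCount v (-1) = 0) ∨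
    (stepCount v (-1) = 2 * M ∧ stepCount v 1 = 0) ∨ stepCount v 1 = stepCount v (-1) := by
  obtain ⟨h1, h2, h3⟩ := ZMod.one_ne_neg_one_ne_half hM
  have hcount : stepCount v 1 + stepCount v (-1) + stepCount v M = 2 * M := by
    have hsum := sum_comp_eq_of_mem_three h1 h2 h3 hv fun _ => 1
    simp only [sum_const, card_univ, ZMod.card, smul_eq_mul, mul_one] at hsum
    exact hsum.symm
  have hdvd : ((2 * M : ℕ) : ℤ) ∣ stepCount v 1 - stepCount v (-1) + stepCount v M * M := by
    have hsum := sum_comp_eq_of_mem_three h1 h2 h3 hv id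
    simp only [id, nsmul_eq_mul, ZMod.sum_add_one_sub_eq_zero, mul_one, mul_neg] at hsum
    rw [← ZMod.intCast_zmod_eq_zero_iff_dvd]
    push_cast
    unfold stepCount
    linear_combination -hsum
  push_cast at hdvd
  rcases sub_eq_or_sub_eq_or_eq_of_two_mul_dvd ((Int.even_coe_nat M).2 hMeven)
    (by positivity) (by positivity) (by positivity) (by exact_mod_cast hcount) hdvd
    with h | h | h
  · exact Or.inl ⟨by omega, by omega⟩
  · exact Or.inr (Or.inl ⟨by omega, by omega⟩)
  · exact Or.inr (Or.inr (by exact_mod_cast h))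

theorem two_mul_sub_one_le_stepCount_add (hM : 2 ≤ M)
    (hv : ∀ i, v (i + 1) - v i = 1 ∨ v (i + 1) - v i = -1 ∨ v (i + 1) - v i = M)
    (hsurj : Function.Surjective v) (hbal : stepCount v 1 = stepCount v (-1)) :
    2 * (M - 1) ≤ stepCount v 1 + stepCount v (-1) := by
  obtain ⟨h1, h2, h3⟩ := ZMod.one_ne_neg_one_ne_half hM
  have : NeZero M := ⟨by omega⟩
  -- the `±1`-part of each step; the `M`-steps vanish in `ZMod M`
  let e : ZMod (2 * M) → ℤ := fun i =>
    (if v (i + 1) - v i = 1 then 1 else 0) - (if v (i + 1) - v i = -1 then 1 else 0)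
  have hw : ∀ i, ZMod.castHom (dvd_mul_left M 2) (ZMod M) (v (i + 1)) =
      ZMod.castHom (dvd_mul_left M 2) (ZMod M) (v i) + e i := by
    intro i
    rw [← sub_add_cancel (v (i + 1)) (v i), map_add, add_comm]
    congr 1
    rcases hv i with h | h | h <;> simp [e, h, h1, h1.symm, h2.symm, h3.symm]
  have hsum : ∑ i, e i = 0 := by
    simp only [e, sum_sub_distrib, sum_boole]
    exact sub_eq_zero.2 (congrArg Nat.cast hbal)
  have habs : ∑ i, |e i| = stepCount v 1 + stepCount v (-1) := by
    rw [stepCount, stepCount, ← sum_boole, ← sum_boole, ← sum_add_distrib]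
    refine sum_congr rfl fun i _ => ?_
    rcases hv i with h | h | h <;> simp [e, h, h1, h1.symm, h2.symm, h3.symm]
  have hcover := ZMod.two_mul_sub_one_le_sum_abs ((ZMod.castHom_surjective _).comp hsurj) hw hsum
  rw [habs] at hcover
  omega

end HalfStepWalk

/-- For `n = 2^{k+1}`, any Hamiltonian cycle on `ZMod n` with steps in `{+1, −1, +2^k}`
either uses only `+1` steps (`n` of them), or only `−1` steps (`n` of them), or uses at
least `2^k − 1` steps of each; consequently it uses at least `2^{k+1} − 2` steps of
length one, i.e. costs at least `2^{k+1} − 2` when length-one edges cost `1` and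
length-`n/2` edges cost `0`. -/
theorem stmt_8 (k : ℕ) (hk : 1 ≤ k) (n : ℕ) [NeZero n] (hn : n = 2 ^ (k + 1))
    (v : ZMod n → ZMod n) (hbij : Function.Bijective v)
    (hstep : ∀ i : ZMod n, v (i + 1) - v i ∈ ({1, -1, (2 ^ k : ZMod n)} : Set (ZMod n)))
    (s₁ s₂ : ℕ)
    (hs₁ : s₁ = (Finset.univ.filter (fun i : ZMod n => v (i + 1) - v i = 1)).card)
    (hs₂ : s₂ = (Finset.univ.filter (fun i : ZMod n => v (i + 1) - v i = -1)).card) :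
    ((s₁ = n ∧ s₂ = 0) ∨ (s₂ = n ∧ s₁ = 0) ∨ (2 ^ k - 1 ≤ s₁ ∧ 2 ^ k - 1 ≤ s₂)) ∧
    2 ^ (k + 1) - 2 ≤ s₁ + s₂ := by
  obtain ⟨M, hMk⟩ : ∃ M, 2 ^ k = M := ⟨_, rfl⟩
  have hM : 2 ≤ M := hMk ▸ Nat.le_self_pow (by omega) 2
  have hMeven : Even M := hMk ▸ Nat.even_pow.2 ⟨even_two, by omega⟩
  obtain rfl : n = 2 * M := by rw [hn, pow_succ', hMk]
  rw [pow_succ', hMk]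
  have hv : ∀ i, v (i + 1) - v i = 1 ∨ v (i + 1) - v i = -1 ∨ v (i + 1) - v i = M := by
    have hMcast : (2 ^ k : ZMod (2 * M)) = M := by rw [← hMk]; push_cast; rfl
    simpa [hMcast] using hstep
  change s₁ = stepCount v 1 at hs₁
  change s₂ = stepCount v (-1) at hs₂
  subst hs₁ hs₂
  rcases stepCount_eq_or_eq_or_eq hM hMeven hv with h | h | h
  · exact ⟨Or.inl h, by omega⟩
  · exact ⟨Or.inr (Or.inl h), by omega⟩
  · have hcost := two_mul_sub_one_le_stepCount_add hM hv hbij.2 h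
    exact ⟨Or.inr (Or.inr ⟨by omega, by omega⟩), by omega⟩
end

section
/- Let n ≥ 3, d = ⌊n/2⌋, and let φ be a permutation of {1,...,d}. Define g_0 = n and g_i = gcd(g_{i−1}, φ(i)). Define edge weights x on K_n (vertices Z_n) by: every edge of length φ(i) gets weight (g_{i−1} − g_i)/n if i < ℓ (doubled if φ(i) = n/2), weight g_{ℓ−1}/n if i = ℓ (doubled if φ(ℓ) = n/2), and weight 0 for i > ℓ, where ℓ = min{i : g_i = 1}. Then x satisfies the degree constraints: for every vertex v, Σ_{e ∈ δ(v)} x_e = 2. -/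
/-!
Group the neighbours `v` of a vertex `w` by the length `k` of the edge `wv`. For `1 ≤ k < n/2` there
are two neighbours at distance `k`, for `k = n/2` only one, which the doubled weight compensates;
so the degree of `w` is twice the sum of the weights of the lengths. Through the permutation `φ`
that sum is `∑_{i < ℓ} (g_{i-1} - g_i)/n + g_{ℓ-1}/n`, which telescopes to `g_0/n = 1`.
Here `ℓ ≤ n/2` because `g_i = 1` as soon as `φ i = 1`.
-/

open Finset

theorem Sym2.sum_filter_mem_not_isDiag {α M : Type*} [Fintype α] [DecidableEq α]
    [AddCommMonoid M] (f : Sym2 α → M) (w : α)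
    [DecidablePred (fun e : Sym2 α => w ∈ e ∧ ¬ e.IsDiag)] :
    ∑ e ∈ univ.filter (fun e : Sym2 α => w ∈ e ∧ ¬ e.IsDiag), f e
      = ∑ v ∈ univ.erase w, f s(w, v) := by
  have himage : univ.filter (fun e : Sym2 α => w ∈ e ∧ ¬ e.IsDiag)
      = (univ.erase w).image fun v => s(w, v) := by
    ext e
    simp only [mem_filter, mem_univ, true_and, mem_image, mem_erase, and_true]
    constructor
    · induction e using Sym2.ind with
      | _ a b =>
        rintro ⟨hw, hab⟩
        rw [Sym2.mk_isDiag_iff] at hab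
        rcases Sym2.mem_iff.mp hw with rfl | rfl
        · exact ⟨b, Ne.symm hab, rfl⟩
        · exact ⟨a, hab, Sym2.eq_swap⟩
    · rintro ⟨v, hvw, rfl⟩
      simpa [eq_comm] using hvw
  rw [himage, sum_image fun _ _ _ _ h => Sym2.congr_right.mp h]

namespace ZMod

variable {n : ℕ} [NeZero n]

theorem min_val_neg_val (a : ZMod n) : min (-a).val a.val = a.valMinAbs.natAbs := by
  rw [valMinAbs_natAbs_eq_min, neg_val]
  split_ifs with h
  · simp [h]
  · exact min_comm _ _

theorem filter_natAbs_valMinAbs_eq {k : ℕ} (hk : k ≤ n / 2) :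
    univ.filter (fun a : ZMod n => a.valMinAbs.natAbs = k) = {(k : ZMod n), -(k : ZMod n)} := by
  ext a
  conv_lhs => rw [← Int.natAbs_natCast k, ← valMinAbs_natCast_of_le_half hk]
  simp [natAbs_valMinAbs_eq_natAbs_valMinAbs]

theorem sum_erase_zero_natAbs_valMinAbs {R : Type*} [Semiring R] (f : ℕ → R) :
    ∑ a ∈ univ.erase (0 : ZMod n),
        f a.valMinAbs.natAbs * (if 2 * a.valMinAbs.natAbs = n then 2 else 1)
      = 2 * ∑ k ∈ Icc 1 (n / 2), f k := by
  have hmaps : ∀ a ∈ univ.erase (0 : ZMod n), a.valMinAbs.natAbs ∈ Icc 1 (n / 2) := by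
    intro a ha
    simpa [Nat.one_le_iff_ne_zero, natAbs_valMinAbs_le] using ha
  rw [← sum_fiberwise_of_maps_to' hmaps fun k => f k * if 2 * k = n then 2 else 1, mul_sum]
  refine sum_congr rfl fun k hk => ?_
  obtain ⟨hk1, hk⟩ := mem_Icc.mp hk
  have hkval : (k : ZMod n).val = k := val_cast_of_lt (by omega)
  have hk0 : (k : ZMod n) ≠ 0 := fun h => by simp [h] at hkval; omega
  rw [filter_erase, filter_natAbs_valMinAbs_eq hk, erase_eq_of_notMem (by simp [hk0, eq_comm]),
    sum_const]
  by_cases h2k : 2 * k = n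
  · have : -(k : ZMod n) = k := (neg_eq_self_iff _).mpr (Or.inr (by rw [hkval, h2k]))
    simp [this, h2k, mul_two, two_mul]
  · have : (k : ZMod n) ≠ -k := fun h => by
      rcases (neg_eq_self_iff _).mp h.symm with h | h <;> [exact hk0 h; omega]
    rw [card_pair this, if_neg h2k, mul_one, two_smul, two_mul]

end ZMod

theorem Set.BijOn.sum_comp_invFunOn {ι M : Type*} [Nonempty ι] [AddCommMonoid M] {φ : ι → ι}
    {s : Finset ι} (hφ : Set.BijOn φ s s) (f : ι → M) :
    ∑ k ∈ s, f (Function.invFunOn φ s k) = ∑ i ∈ s, f i :=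
  (sum_nbij (g := fun k => f (Function.invFunOn φ s k)) φ hφ.mapsTo hφ.injOn hφ.surjOn
    fun _ hi => congrArg f (hφ.invOn_invFunOn.1 hi).symm).symm

theorem Finset.sum_Icc_one_sub_pred {M : Type*} [AddCommGroup M] (G : ℕ → M) (m : ℕ) :
    ∑ i ∈ Icc 1 m, (G (i - 1) - G i) = G 0 - G m := by
  induction m with
  | zero => simp
  | succ m ih => rw [sum_Icc_succ_top (by omega), ih, Nat.add_sub_cancel]; abel

theorem Finset.sum_Icc_one_truncated_telescope {M : Type*} [AddCommGroup M] (G : ℕ → M)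
    {ℓ d : ℕ} (hℓ : 1 ≤ ℓ) (hℓd : ℓ ≤ d) :
    ∑ i ∈ Icc 1 d, (if i < ℓ then G (i - 1) - G i else if i = ℓ then G (i - 1) else 0)
      = G 0 := by
  obtain ⟨m, rfl⟩ : ∃ m, ℓ = m + 1 := ⟨ℓ - 1, by omega⟩
  rw [← sum_subset (Icc_subset_Icc_right hℓd) fun i hi hi' => ?_, sum_Icc_succ_top (by omega)]
  · rw [sum_congr rfl fun i hi => if_pos (by simp at hi; omega), sum_Icc_one_sub_pred]
    simp
  · simp at hi hi'
    rw [if_neg (by omega), if_neg (by omega)]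

open scoped Classical in
/-- The explicit subtour-LP solution of Theorem 3.1 satisfies the degree constraints:
with `g_0 = n`, `g_i = gcd(g_{i−1}, φ(i))`, `ℓ = min{i : g_i = 1}`, giving every edge of
length `φ(i)` weight `(g_{i−1} − g_i)/n` for `i < ℓ`, `g_{ℓ−1}/n` for `i = ℓ` (doubled
when `φ(i) = n/2`), and `0` for `i > ℓ`, every vertex has weighted degree `2`. -/
theorem stmt_10 (n : ℕ) (hn : 3 ≤ n) [NeZero n] (φ : ℕ → ℕ)
    (hφ : Set.BijOn φ (Set.Icc 1 (n / 2)) (Set.Icc 1 (n / 2)))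
    (g : ℕ → ℕ) (hg0 : g 0 = n)
    (hg : ∀ i, 1 ≤ i → g i = Nat.gcd (g (i - 1)) (φ i))
    (ℓ : ℕ) (hℓ1 : g ℓ = 1) (hℓmin : ∀ i < ℓ, g i ≠ 1)
    (x : Sym2 (ZMod n) → ℝ)
    (hx : ∀ u v : ZMod n, u ≠ v → ∀ i, 1 ≤ i → i ≤ n / 2 →
      φ i = min (u - v).val (v - u).val →
      x s(u, v) = (if i < ℓ then ((g (i - 1) : ℝ) - g i) / n
          else if i = ℓ then (g (i - 1) : ℝ) / n else 0) *
        (if 2 * φ i = n then 2 else 1)) :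
    ∀ w : ZMod n,
      (∑ e ∈ Finset.univ.filter
          (fun e : Sym2 (ZMod n) => w ∈ e ∧ ¬ e.IsDiag), x e) = 2 := by
  intro w
  rw [← coe_Icc] at hφ
  set ψ := Function.invFunOn φ ↑(Icc 1 (n / 2))
  set G : ℕ → ℝ := fun i => (g i : ℝ) / n
  set y : ℕ → ℝ := fun i => if i < ℓ then G (i - 1) - G i else if i = ℓ then G (i - 1) else 0
  have hxw : ∀ a : ZMod n, a ≠ 0 → x s(w, w + a)
      = y (ψ a.valMinAbs.natAbs) * (if 2 * a.valMinAbs.natAbs = n then 2 else 1) := by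
    intro a ha
    have hk : a.valMinAbs.natAbs ∈ (↑(Icc 1 (n / 2)) : Set ℕ) := by
      simpa [Nat.one_le_iff_ne_zero, ZMod.natAbs_valMinAbs_le] using ha
    have hφψ : φ (ψ _) = _ := hφ.invOn_invFunOn.2 hk
    obtain ⟨hi1, hid⟩ := mem_Icc.mp (hφ.surjOn.mapsTo_invFunOn hk)
    rw [hx w (w + a) (by simpa using ha) _ hi1 hid (by
      rw [hφψ, sub_add_cancel_left, add_sub_cancel_left, ZMod.min_val_neg_val]), hφψ]
    simp only [y, G, ψ, sub_div]
  have hℓpos : 1 ≤ ℓ := Nat.one_le_iff_ne_zero.mpr (by rintro rfl; omega)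
  have hℓd : ℓ ≤ n / 2 := by
    obtain ⟨i, hi, hφi⟩ := hφ.surjOn (show 1 ∈ (↑(Icc 1 (n / 2)) : Set ℕ) by simp; omega)
    obtain ⟨hi1, hid⟩ := mem_Icc.mp hi
    exact (not_lt.mp fun h => hℓmin i h (by rw [hg i hi1, hφi, Nat.gcd_one_right])).trans hid
  calc _ = ∑ v ∈ univ.erase w, x s(w, v) := Sym2.sum_filter_mem_not_isDiag x w
    _ = ∑ a ∈ univ.erase 0, x s(w, w + a) :=
      sum_nbij' (· - w) (w + ·) (by simp [sub_eq_zero]) (by simp) (by simp) (by simp) (by simp)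
    _ = ∑ a ∈ univ.erase 0,
        y (ψ a.valMinAbs.natAbs) * (if 2 * a.valMinAbs.natAbs = n then 2 else 1) :=
      sum_congr rfl fun a ha => hxw a (ne_of_mem_erase ha)
    _ = 2 * ∑ k ∈ Icc 1 (n / 2), y (ψ k) :=
      ZMod.sum_erase_zero_natAbs_valMinAbs fun k => y (ψ k)
    _ = 2 * ∑ i ∈ Icc 1 (n / 2), y i := by rw [hφ.sum_comp_invFunOn]
    _ = 2 := by
      rw [sum_Icc_one_truncated_telescope G hℓpos hℓd]
      simp [G, hg0]
end

section
/- With the edge weights x of the previous context, for every 0 ≤ i ≤ ℓ−1 and every connected component S of the circulant graph C⟨{φ(1),...,φ(i)}⟩, one has x(E(S)) = |S| − 1 and hence x(δ(S)) = 2. -/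
/-!
The jumps `φ(1), …, φ(i)` generate the subgroup of `ℤ/n` of multiples of
`g_i = gcd(n, φ(1), …, φ(i))`, so `S` is a coset of it and `|S| = n / g_i`. The weight of an edge
depends only on its length, so `x` is translation invariant, and `2 x(E(S))` and `x(δ(S))` are
`|S|` times the weight at one vertex of the edges whose difference lies in `⟨g_i⟩ \ {0}`,
resp. outside `⟨g_i⟩`. At a vertex every length `m < n/2` occurs twice and `n/2` once with
doubled weight, so these are twice the sums of the weights of the ranks `j` with `g_i ∣ φ(j)`,
resp. `g_i ∤ φ(j)`. Among `j ≤ ℓ` the former are exactly `j ≤ i` (the `g` strictly decrease),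
ranks beyond `ℓ` weigh nothing (and `ℓ ≤ n/2`, since each `g_j` is at most half of `g_{j-1}`),
and the weights telescope to `(n - g_i)/n` and `g_i/n`.
-/

open Finset

theorem SimpleGraph.circulantGraph_reachable_iff {G : Type*} [AddCommGroup G] {s : Set G}
    {u v : G} : (circulantGraph s).Reachable u v ↔ v - u ∈ AddSubgroup.closure s := by
  constructor
  · rw [reachable_iff_reflTransGen]
    intro h
    induction h with
    | refl => simp
    | @tail b c _ hadj ih =>
      have hcb : c - b ∈ AddSubgroup.closure s := by
        rcases ((circulantGraph_adj s b c).mp hadj).2 with h | h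
        · simpa using neg_mem (AddSubgroup.subset_closure h)
        · exact AddSubgroup.subset_closure h
      simpa using add_mem ih hcb
  · have key : ∀ z ∈ AddSubgroup.closure s, ∀ w, (circulantGraph s).Reachable w (w + z) := by
      intro z hz
      induction hz using AddSubgroup.closure_induction with
      | mem z hz =>
        intro w
        by_cases h0 : z = 0
        · simp [h0]
        · exact Adj.reachable (by simp [circulantGraph_adj, h0, hz])
      | zero => simp
      | add z₁ z₂ _ _ h₁ h₂ => exact fun w => (h₁ w).trans (by simpa [add_assoc] using h₂ (w + z₁))
      | neg z _ h => exact fun w => by simpa [← sub_eq_add_neg] using (h (w - z)).symm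
    exact fun h => by simpa using key _ h u

theorem AddSubgroup.zmultiples_natCast_sup (R : Type*) [AddGroupWithOne R] (a b : ℕ) :
    zmultiples (a : R) ⊔ zmultiples (b : R) = zmultiples ((a.gcd b : ℕ) : R) := by
  simpa [AddSubgroup.map_sup, AddMonoidHom.map_zmultiples] using
    congrArg (map (Int.castAddHom R)) (Int.zmultiples_sup a b)

namespace ZMod

theorem mem_zmultiples_natCast_iff {n d : ℕ} (hd : d ∣ n) (z : ZMod n) :
    z ∈ AddSubgroup.zmultiples (d : ZMod n) ↔ d ∣ z.valMinAbs.natAbs := by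
  rw [← Int.natCast_dvd, AddSubgroup.mem_zmultiples_iff]
  constructor
  · rintro ⟨k, rfl⟩
    have hcast : ((k * d : ℤ) : ZMod n) = ((k • (d : ZMod n)).valMinAbs : ZMod n) := by
      simp [coe_valMinAbs]
    rw [intCast_eq_intCast_iff_dvd_sub] at hcast
    exact (dvd_sub_left (dvd_mul_left _ _)).mp ((Int.natCast_dvd_natCast.mpr hd).trans hcast)
  · rintro ⟨k, hk⟩
    exact ⟨k, by rw [← z.coe_valMinAbs, hk]; push_cast; ring⟩

theorem min_val_neg_val_s11 {n : ℕ} [NeZero n] (z : ZMod n) :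
    min (-z).val z.val = z.valMinAbs.natAbs := by
  rcases eq_or_ne z 0 with rfl | hz
  · simp
  · have : NeZero z := ⟨hz⟩
    rw [val_neg_of_ne_zero, valMinAbs_natAbs_eq_min, min_comm]

theorem card_filter_natAbs_valMinAbs_eq {n m : ℕ} [NeZero n] (hm : m ∈ Set.Icc 1 (n / 2)) :
    #{z : ZMod n | z.valMinAbs.natAbs = m} = if 2 * m = n then 1 else 2 := by
  obtain ⟨hm1, hm2⟩ := hm
  have hmn : m < n := by omega
  have hval : (m : ZMod n).val = m := val_natCast_of_lt hmn
  have hlen : (m : ZMod n).valMinAbs.natAbs = m := by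
    rw [valMinAbs_natCast_of_le_half hm2, Int.natAbs_natCast]
  have hfiber : ({z : ZMod n | z.valMinAbs.natAbs = m} : Finset _) =
      {(m : ZMod n), -(m : ZMod n)} := by
    ext z
    conv_lhs => rw [mem_filter, ← hlen, natAbs_valMinAbs_eq_natAbs_valMinAbs]
    simp
  rw [hfiber]
  split_ifs with h2m
  · rw [(neg_eq_self_iff _).2 (Or.inr (by rw [hval, h2m]))]
    simp
  · refine card_pair fun h => ?_
    rcases (neg_eq_self_iff _).1 h.symm with h0 | h2
    · rw [← val_eq_zero, hval] at h0
      omega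
    · exact h2m (by rwa [hval] at h2)

theorem nat_card_zmultiples_natCast {n d : ℕ} [NeZero n] (hd : d ∣ n) :
    Nat.card (AddSubgroup.zmultiples (d : ZMod n)) = n / d := by
  rw [Nat.card_zmultiples, addOrderOf_coe _ (NeZero.ne n), Nat.gcd_eq_right hd]

theorem natAbs_valMinAbs_mem_Icc {n : ℕ} [NeZero n] {z : ZMod n} (hz : z ≠ 0) :
    z.valMinAbs.natAbs ∈ Set.Icc 1 (n / 2) :=
  ⟨Nat.one_le_iff_ne_zero.mpr (by simpa using hz), natAbs_valMinAbs_le z⟩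

theorem sum_filter_ne_zero_eq_two_mul_sum {n : ℕ} [NeZero n] {φ : ℕ → ℕ}
    (hφ : Set.BijOn φ (Set.Icc 1 (n / 2)) (Set.Icc 1 (n / 2))) {R : Type*} [Semiring R]
    (f : ZMod n → R) (w : ℕ → R)
    (hf : ∀ z ≠ 0, ∀ j ∈ Set.Icc 1 (n / 2), φ j = z.valMinAbs.natAbs →
      f z = w j * if 2 * φ j = n then 2 else 1)
    (P : ℕ → Prop) [DecidablePred P] :
    ∑ z with z ≠ 0 ∧ P z.valMinAbs.natAbs, f z = 2 * ∑ j ∈ Icc 1 (n / 2) with P (φ j), w j := by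
  rw [← sum_fiberwise_of_maps_to (g := fun z : ZMod n => z.valMinAbs.natAbs)
    (t := {m ∈ Icc 1 (n / 2) | P m}) ?maps, mul_sum]
  case maps =>
    intro z hz
    rw [mem_filter] at hz ⊢
    exact ⟨mem_Icc.mpr (natAbs_valMinAbs_mem_Icc hz.2.1), hz.2.2⟩
  symm
  refine sum_nbij φ (fun j hj => ?_) (hφ.injOn.mono fun j hj => by simpa using (mem_filter.mp hj).1)
    (fun m hm => ?_) (fun j hj => ?_)
  · simp only [mem_filter, mem_Icc, ← Set.mem_Icc] at hj ⊢
    exact ⟨hφ.mapsTo hj.1, hj.2⟩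
  · simp only [coe_filter, mem_Icc, ← Set.mem_Icc, Set.mem_ofPred_eq] at hm
    obtain ⟨j, hj, rfl⟩ := hφ.surjOn hm.1
    exact ⟨j, by simpa using ⟨hj, hm.2⟩, rfl⟩
  · simp only [mem_filter, mem_Icc, ← Set.mem_Icc] at hj
    have hφj := hφ.mapsTo hj.1
    have hne : ∀ z : ZMod n, z.valMinAbs.natAbs = φ j → z ≠ 0 := by
      rintro z hz rfl
      simp [← hz] at hφj
    rw [filter_filter, filter_congr fun z _ => ⟨fun h => h.2, fun h => ⟨⟨hne z h, h ▸ hj.2⟩, h⟩⟩,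
      sum_congr rfl fun z hz => hf z (hne z (mem_filter.mp hz).2) j hj.1 (mem_filter.mp hz).2.symm,
      sum_const, card_filter_natAbs_valMinAbs_eq hφj]
    split_ifs <;> simp [two_mul, mul_two]

theorem sum_mem_zmultiples_ne_zero {n d : ℕ} [NeZero n] (hd : d ∣ n) {φ : ℕ → ℕ}
    (hφ : Set.BijOn φ (Set.Icc 1 (n / 2)) (Set.Icc 1 (n / 2))) {R : Type*} [Semiring R]
    {f : ZMod n → R} {w : ℕ → R}
    (hf : ∀ z ≠ 0, ∀ j ∈ Set.Icc 1 (n / 2), φ j = z.valMinAbs.natAbs →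
      f z = w j * if 2 * φ j = n then 2 else 1) :
    ∑ z with z ∈ AddSubgroup.zmultiples (d : ZMod n) ∧ z ≠ 0, f z =
      2 * ∑ j ∈ Icc 1 (n / 2) with d ∣ φ j, w j := by
  rw [filter_congr fun z _ => by rw [mem_zmultiples_natCast_iff hd, and_comm],
    sum_filter_ne_zero_eq_two_mul_sum hφ f w hf (d ∣ ·)]

theorem sum_not_mem_zmultiples {n d : ℕ} [NeZero n] (hd : d ∣ n) {φ : ℕ → ℕ}
    (hφ : Set.BijOn φ (Set.Icc 1 (n / 2)) (Set.Icc 1 (n / 2))) {R : Type*} [Semiring R]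
    {f : ZMod n → R} {w : ℕ → R}
    (hf : ∀ z ≠ 0, ∀ j ∈ Set.Icc 1 (n / 2), φ j = z.valMinAbs.natAbs →
      f z = w j * if 2 * φ j = n then 2 else 1) :
    ∑ z with z ∉ AddSubgroup.zmultiples (d : ZMod n), f z =
      2 * ∑ j ∈ Icc 1 (n / 2) with ¬ d ∣ φ j, w j := by
  have hnot : ∀ z : ZMod n, z ∉ AddSubgroup.zmultiples (d : ZMod n) ↔
      z ≠ 0 ∧ ¬ d ∣ z.valMinAbs.natAbs := fun z => by
    rw [mem_zmultiples_natCast_iff hd]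
    exact ⟨fun h => ⟨by rintro rfl; simp at h, h⟩, And.right⟩
  rw [filter_congr fun z _ => hnot z, sum_filter_ne_zero_eq_two_mul_sum hφ f w hf (¬ d ∣ ·)]

theorem apply_add_add_of_forall_min_val {n : ℕ} [NeZero n] {φ : ℕ → ℕ}
    (hφ : Set.SurjOn φ (Set.Icc 1 (n / 2)) (Set.Icc 1 (n / 2))) {α : Type*}
    {x : Sym2 (ZMod n) → α} {w : ℕ → α}
    (hx : ∀ u v : ZMod n, u ≠ v → ∀ j, 1 ≤ j → j ≤ n / 2 →
      φ j = min (u - v).val (v - u).val → x s(u, v) = w j)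
    (a u v : ZMod n) (huv : u ≠ v) : x s(a + u, a + v) = x s(u, v) := by
  have hlen : min (u - v).val (v - u).val ∈ Set.Icc 1 (n / 2) := by
    rw [← neg_sub, min_val_neg_val_s11]
    exact natAbs_valMinAbs_mem_Icc (sub_ne_zero.mpr huv.symm)
  obtain ⟨j, hj, hφj⟩ := hφ hlen
  rw [hx u v huv j hj.1 hj.2 hφj, hx _ _ (by simpa using huv) j hj.1 hj.2 (by simpa using hφj)]

end ZMod

section DoubleCounting

variable {V M : Type*} [DecidableEq V] [AddCommMonoid M]

theorem Finset.sum_offDiag_sym2Mk (T : Finset V) (x : Sym2 V → M) :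
    ∑ p ∈ T.offDiag, x s(p.1, p.2) = 2 • ∑ e ∈ T.sym2 with ¬ e.IsDiag, x e := by
  rw [sym2_eq_image, Sym2.filter_image_mk_not_isDiag, smul_sum]
  refine (sum_image' _ fun ⟨a, b⟩ hp => ?_).symm
  have hab : a ≠ b := (mem_offDiag.mp hp).2.2
  have hfiber : {q ∈ T.offDiag | Sym2.mk.uncurry q = s(a, b)} = {(a, b), (b, a)} := by
    ext ⟨c, d⟩
    simp only [mem_offDiag] at hp
    aesop
  rw [Function.uncurry_apply_pair, hfiber, sum_pair (by simp [hab]), two_smul]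
  simp [Sym2.eq_swap]

variable [Fintype V]

open scoped Classical in
theorem two_smul_sum_sym2_filter_forall_mem (S : Set V) (x : Sym2 V → M) :
    2 • ∑ e with ¬ e.IsDiag ∧ ∀ v ∈ e, v ∈ S, x e =
      ∑ a with a ∈ S, ∑ b with b ∈ S ∧ b ≠ a, x s(a, b) := by
  have hedges : ({e | ¬ e.IsDiag ∧ ∀ v ∈ e, v ∈ S} : Finset (Sym2 V)) =
      {e ∈ ({v | v ∈ S} : Finset V).sym2 | ¬ e.IsDiag} := by
    ext e
    simp [mem_sym2_iff, and_comm]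
  rw [hedges, ← sum_offDiag_sym2Mk]
  exact sum_finset_product' (f := fun a b => x s(a, b)) _ _ _ fun p => by
    simp [mem_offDiag, ne_comm]

open scoped Classical in
theorem sum_sym2_filter_exists_mem_not_mem (S : Set V) (x : Sym2 V → M) :
    ∑ e with ∃ a b, e = s(a, b) ∧ a ∈ S ∧ b ∉ S, x e =
      ∑ a with a ∈ S, ∑ b with b ∉ S, x s(a, b) := by
  have hboundary : ({e | ∃ a b, e = s(a, b) ∧ a ∈ S ∧ b ∉ S} : Finset (Sym2 V)) =
      (({a | a ∈ S} : Finset V) ×ˢ ({b | b ∉ S} : Finset V)).image Sym2.mk.uncurry := by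
    ext e
    simp only [mem_filter, mem_univ, true_and, mem_image, mem_product, Prod.exists]
    constructor
    · rintro ⟨a, b, rfl, ha, hb⟩
      exact ⟨a, b, ⟨ha, hb⟩, rfl⟩
    · rintro ⟨a, b, ⟨ha, hb⟩, rfl⟩
      exact ⟨a, b, rfl, ha, hb⟩
  rw [hboundary, sum_image]
  · exact sum_product' _ _ fun a b => x s(a, b)
  rintro ⟨a, b⟩ hab ⟨c, d⟩ hcd h
  simp only [coe_product, coe_filter, mem_univ, true_and, Set.mem_prod, Set.mem_ofPred_eq]
    at hab hcd
  rcases Sym2.eq_iff.mp h with ⟨rfl, rfl⟩ | ⟨rfl, rfl⟩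
  · rfl
  · exact absurd hab.1 hcd.2

end DoubleCounting

section Coset

variable {G M : Type*} [AddCommGroup G] {H : AddSubgroup G} {S : Set G} {u₀ : G}

theorem ncard_eq_nat_card_of_mem_iff_sub_mem (hS : ∀ v, v ∈ S ↔ v - u₀ ∈ H) :
    S.ncard = Nat.card H := by
  rw [show S = (· - u₀) ⁻¹' H from Set.ext hS,
    Set.ncard_preimage_of_injective_subset_range sub_left_injective fun z _ => ⟨z + u₀, by simp⟩]
  exact (Nat.card_coe_set_eq _).symm

theorem mem_iff_sub_mem_of_mem (hS : ∀ v, v ∈ S ↔ v - u₀ ∈ H) {a : G} (ha : a ∈ S) (b : G) :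
    b ∈ S ↔ b - a ∈ H := by
  rw [hS, ← sub_add_sub_cancel b a u₀, H.add_mem_cancel_right ((hS a).1 ha)]

variable [Fintype G] [AddCommMonoid M] {x : Sym2 G → M}

theorem sum_filter_sub_eq_of_add_invariant (hx : ∀ a u v, u ≠ v → x s(a + u, a + v) = x s(u, v))
    (u : G) (p : G → Prop) [DecidablePred p] (hp : ¬ p 0) :
    ∑ v with p (v - u), x s(u, v) = ∑ z with p z, x s(0, z) := by
  refine sum_nbij' (· - u) (u + ·) (by simp) (by simp) (by simp) (by simp) fun v hv => ?_
  have hvu : v - u ≠ 0 := fun h => hp (h ▸ (mem_filter.mp hv).2)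
  simpa using hx u 0 (v - u) hvu.symm

variable [DecidableEq G]

open scoped Classical in
theorem two_smul_sum_sym2_filter_forall_mem_eq_ncard_smul
    (hx : ∀ a u v, u ≠ v → x s(a + u, a + v) = x s(u, v)) (hS : ∀ v, v ∈ S ↔ v - u₀ ∈ H) :
    2 • ∑ e with ¬ e.IsDiag ∧ ∀ v ∈ e, v ∈ S, x e =
      S.ncard • ∑ z with z ∈ H ∧ z ≠ 0, x s(0, z) := by
  have hinner : ∀ a ∈ ({a | a ∈ S} : Finset G),
      ∑ b with b ∈ S ∧ b ≠ a, x s(a, b) = ∑ z with z ∈ H ∧ z ≠ 0, x s(0, z) := by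
    intro a ha
    rw [← sum_filter_sub_eq_of_add_invariant hx a (fun z => z ∈ H ∧ z ≠ 0) (by simp)]
    refine sum_congr (filter_congr fun b _ => ?_) fun _ _ => rfl
    rw [mem_iff_sub_mem_of_mem hS (mem_filter.mp ha).2, sub_ne_zero]
  rw [two_smul_sum_sym2_filter_forall_mem, sum_congr rfl hinner, sum_const,
    ← Set.ncard_coe_finset, coe_filter_univ, Set.ofPred_mem_eq]

open scoped Classical in
theorem sum_sym2_filter_exists_mem_not_mem_eq_ncard_smul
    (hx : ∀ a u v, u ≠ v → x s(a + u, a + v) = x s(u, v)) (hS : ∀ v, v ∈ S ↔ v - u₀ ∈ H) :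
    ∑ e with ∃ a b, e = s(a, b) ∧ a ∈ S ∧ b ∉ S, x e = S.ncard • ∑ z with z ∉ H, x s(0, z) := by
  have hinner : ∀ a ∈ ({a | a ∈ S} : Finset G),
      ∑ b with b ∉ S, x s(a, b) = ∑ z with z ∉ H, x s(0, z) := by
    intro a ha
    rw [← sum_filter_sub_eq_of_add_invariant hx a (· ∉ H) (by simp)]
    refine sum_congr (filter_congr fun b _ => ?_) fun _ _ => rfl
    rw [mem_iff_sub_mem_of_mem hS (mem_filter.mp ha).2]
  rw [sum_sym2_filter_exists_mem_not_mem, sum_congr rfl hinner, sum_const,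
    ← Set.ncard_coe_finset, coe_filter_univ, Set.ofPred_mem_eq]

end Coset

section GcdChain

variable {n ℓ : ℕ} {φ g : ℕ → ℕ}

theorem gcd_chain_dvd_of_le (hg : ∀ i, 1 ≤ i → g i = Nat.gcd (g (i - 1)) (φ i)) {a b : ℕ}
    (hab : a ≤ b) : g b ∣ g a := by
  induction b, hab using Nat.le_induction with
  | base => rfl
  | succ b _ ih =>
    refine dvd_trans ?_ ih
    rw [hg (b + 1) (by omega), Nat.add_sub_cancel]
    exact Nat.gcd_dvd_left _ _

theorem gcd_chain_dvd_phi (hg : ∀ i, 1 ≤ i → g i = Nat.gcd (g (i - 1)) (φ i)) {j k : ℕ}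
    (hj : 1 ≤ j) (hjk : j ≤ k) : g k ∣ φ j :=
  (gcd_chain_dvd_of_le hg hjk).trans (hg j hj ▸ Nat.gcd_dvd_right _ _)

theorem not_gcd_chain_dvd_phi (hg : ∀ i, 1 ≤ i → g i = Nat.gcd (g (i - 1)) (φ i))
    (hstrict : ∀ m, 1 ≤ m → m ≤ ℓ → g m < g (m - 1)) {i j : ℕ} (hij : i < j) (hjℓ : j ≤ ℓ) :
    ¬ g i ∣ φ j := by
  intro h
  have hdvd : g (j - 1) ∣ φ j := (gcd_chain_dvd_of_le hg (by omega : i ≤ j - 1)).trans h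
  have hlt := hstrict j (by omega) hjℓ
  rw [hg j (by omega), Nat.gcd_eq_left hdvd] at hlt
  exact lt_irrefl _ hlt

theorem closure_gcd_chain (hg0 : g 0 = n) (hg : ∀ i, 1 ≤ i → g i = Nat.gcd (g (i - 1)) (φ i))
    (i : ℕ) : AddSubgroup.closure {z : ZMod n | ∃ j, 1 ≤ j ∧ j ≤ i ∧ z = (φ j : ZMod n)} =
      AddSubgroup.zmultiples (g i : ZMod n) := by
  induction i with
  | zero => simp [hg0]
  | succ i ih =>
    have hinsert : {z : ZMod n | ∃ j, 1 ≤ j ∧ j ≤ i + 1 ∧ z = (φ j : ZMod n)} =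
        {z : ZMod n | ∃ j, 1 ≤ j ∧ j ≤ i ∧ z = (φ j : ZMod n)} ∪ {(φ (i + 1) : ZMod n)} := by
      ext z
      simp [Nat.le_add_one_iff, and_or_left, or_and_right, exists_or, or_comm]
    rw [hinsert, AddSubgroup.closure_union, ih, ← AddSubgroup.zmultiples_eq_closure,
      AddSubgroup.zmultiples_natCast_sup, hg (i + 1) (by omega), Nat.add_sub_cancel]

theorem Nat.two_mul_le_of_dvd_of_lt {a b : ℕ} (hab : a ∣ b) (hlt : a < b) : 2 * a ≤ b := by
  obtain ⟨c, rfl⟩ := hab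
  rcases c with _ | _ | c
  · simp at hlt
  · simp at hlt
  · nlinarith

theorem two_pow_mul_gcd_chain_le (hg : ∀ i, 1 ≤ i → g i = Nat.gcd (g (i - 1)) (φ i))
    (hstrict : ∀ m, 1 ≤ m → m ≤ ℓ → g m < g (m - 1)) {k : ℕ} (hk : k ≤ ℓ) :
    2 ^ k * g k ≤ g 0 := by
  induction k with
  | zero => simp
  | succ k ih =>
    have hhalve : 2 * g (k + 1) ≤ g k :=
      Nat.two_mul_le_of_dvd_of_lt (gcd_chain_dvd_of_le hg k.le_succ) (hstrict (k + 1) (by omega) hk)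
    calc 2 ^ (k + 1) * g (k + 1) = 2 ^ k * (2 * g (k + 1)) := by ring
      _ ≤ 2 ^ k * g k := Nat.mul_le_mul_left _ hhalve
      _ ≤ g 0 := ih (by omega)

theorem gcd_chain_length_le_half [NeZero n] (hg0 : g 0 = n)
    (hg : ∀ i, 1 ≤ i → g i = Nat.gcd (g (i - 1)) (φ i))
    (hstrict : ∀ m, 1 ≤ m → m ≤ ℓ → g m < g (m - 1)) : ℓ ≤ n / 2 := by
  have hpos : 0 < g ℓ := Nat.pos_of_dvd_of_pos (hg0 ▸ gcd_chain_dvd_of_le hg ℓ.zero_le)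
    (Nat.pos_of_neZero n)
  have hpow : 2 ^ ℓ ≤ n := hg0 ▸ (Nat.le_mul_of_pos_right _ hpos).trans
    (two_pow_mul_gcd_chain_le hg hstrict le_rfl)
  have hlin : 2 * ℓ ≤ 2 ^ ℓ := by
    rcases ℓ with _ | m
    · simp
    · rw [pow_succ, mul_comm]
      exact Nat.mul_le_mul_right 2 m.lt_two_pow_self
  rw [Nat.le_div_iff_mul_le two_pos]
  omega

variable (n ℓ g) in
noncomputable def stepWeight (j : ℕ) : ℝ :=
  if j < ℓ then ((g (j - 1) : ℝ) - g j) / n else if j = ℓ then (g (j - 1) : ℝ) / n else 0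

theorem stepWeight_of_lt {j : ℕ} (hj : ℓ < j) : stepWeight n ℓ g j = 0 := by
  simp [stepWeight, hj.not_gt, hj.ne']

theorem sum_stepWeight_Icc_of_lt (hg0 : g 0 = n) {k : ℕ} (hk : k < ℓ) :
    ∑ j ∈ Icc 1 k, stepWeight n ℓ g j = (n - g k) / n := by
  rw [sum_congr rfl fun j hj => by rw [stepWeight, if_pos ((mem_Icc.mp hj).2.trans_lt hk)],
    ← sum_div, ← Ico_add_one_right_eq_Icc, sum_Ico_eq_sum_range]
  simp only [add_tsub_cancel_right, add_comm 1, sum_range_sub' (fun j => (g j : ℝ)), hg0]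

theorem sum_stepWeight_Icc_self (hg0 : g 0 = n) (hn : n ≠ 0) (hℓ : ℓ ≠ 0) :
    ∑ j ∈ Icc 1 ℓ, stepWeight n ℓ g j = 1 := by
  obtain ⟨m, rfl⟩ := Nat.exists_eq_add_one_of_ne_zero hℓ
  rw [sum_Icc_succ_top (by omega), sum_stepWeight_Icc_of_lt hg0 (by omega)]
  simp only [stepWeight, lt_irrefl, if_false, if_true, Nat.add_sub_cancel]
  field_simp
  ring

theorem sum_stepWeight_Icc_half [NeZero n] (hg0 : g 0 = n)
    (hg : ∀ i, 1 ≤ i → g i = Nat.gcd (g (i - 1)) (φ i))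
    (hstrict : ∀ m, 1 ≤ m → m ≤ ℓ → g m < g (m - 1)) (hℓ : ℓ ≠ 0) :
    ∑ j ∈ Icc 1 (n / 2), stepWeight n ℓ g j = 1 := by
  rw [← sum_subset (Icc_subset_Icc_right (gcd_chain_length_le_half hg0 hg hstrict))
    fun j hj hj' => stepWeight_of_lt (by simp only [mem_Icc] at hj hj'; omega),
    sum_stepWeight_Icc_self hg0 (NeZero.ne n) hℓ]

theorem sum_stepWeight_filter_dvd [NeZero n] (hg0 : g 0 = n)
    (hg : ∀ i, 1 ≤ i → g i = Nat.gcd (g (i - 1)) (φ i))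
    (hstrict : ∀ m, 1 ≤ m → m ≤ ℓ → g m < g (m - 1)) {i : ℕ} (hi : i < ℓ) :
    ∑ j ∈ Icc 1 (n / 2) with g i ∣ φ j, stepWeight n ℓ g j = (n - g i) / n := by
  have hℓ := gcd_chain_length_le_half hg0 hg hstrict
  rw [← sum_stepWeight_Icc_of_lt hg0 hi]
  refine (sum_subset (fun j hj => ?_) fun j hj hj' => stepWeight_of_lt ?_).symm
  · rw [mem_Icc] at hj
    rw [mem_filter, mem_Icc]
    exact ⟨⟨hj.1, by omega⟩, gcd_chain_dvd_phi hg hj.1 hj.2⟩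
  · rw [mem_filter, mem_Icc] at hj
    rw [mem_Icc] at hj'
    by_contra hjℓ
    exact not_gcd_chain_dvd_phi hg hstrict (by omega) (by omega) hj.2

theorem sum_stepWeight_filter_not_dvd [NeZero n] (hg0 : g 0 = n)
    (hg : ∀ i, 1 ≤ i → g i = Nat.gcd (g (i - 1)) (φ i))
    (hstrict : ∀ m, 1 ≤ m → m ≤ ℓ → g m < g (m - 1)) {i : ℕ} (hi : i < ℓ) :
    ∑ j ∈ Icc 1 (n / 2) with ¬ g i ∣ φ j, stepWeight n ℓ g j = g i / n := by
  have hsplit := sum_filter_add_sum_filter_not (Icc 1 (n / 2)) (fun j => g i ∣ φ j)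
    (stepWeight n ℓ g)
  rw [sum_stepWeight_filter_dvd hg0 hg hstrict hi, sum_stepWeight_Icc_half hg0 hg hstrict
    (by omega)] at hsplit
  have hn : (n : ℝ) ≠ 0 := NeZero.ne _
  rw [eq_sub_of_add_eq' hsplit]
  field_simp
  ring

end GcdChain

open scoped Classical in
theorem stmt_11_general (n : ℕ) [NeZero n] (φ : ℕ → ℕ)
    (hφ : Set.BijOn φ (Set.Icc 1 (n / 2)) (Set.Icc 1 (n / 2)))
    (g : ℕ → ℕ) (hg0 : g 0 = n)
    (hg : ∀ i, 1 ≤ i → g i = Nat.gcd (g (i - 1)) (φ i))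
    (ℓ : ℕ)
    (hstrict : ∀ m, 1 ≤ m → m ≤ ℓ → g m < g (m - 1))
    (x : Sym2 (ZMod n) → ℝ)
    (hx : ∀ u v : ZMod n, u ≠ v → ∀ i, 1 ≤ i → i ≤ n / 2 →
      φ i = min (u - v).val (v - u).val →
      x s(u, v) = (if i < ℓ then ((g (i - 1) : ℝ) - g i) / n
          else if i = ℓ then (g (i - 1) : ℝ) / n else 0) *
        (if 2 * φ i = n then 2 else 1))
    (i : ℕ) (hi : i < ℓ) (u₀ : ZMod n) (S : Set (ZMod n))
    (hS : S = {v : ZMod n | (SimpleGraph.circulantGraph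
        {z : ZMod n | ∃ j, 1 ≤ j ∧ j ≤ i ∧ z = (φ j : ZMod n)}).Reachable u₀ v}) :
    (∑ e ∈ Finset.univ.filter
        (fun e : Sym2 (ZMod n) => ¬ e.IsDiag ∧ ∀ v ∈ e, v ∈ S), x e)
      = (S.ncard : ℝ) - 1 ∧
    (∑ e ∈ Finset.univ.filter
        (fun e : Sym2 (ZMod n) => ∃ a b : ZMod n, e = s(a, b) ∧ a ∈ S ∧ b ∉ S), x e)
      = 2 := by
  have hdn : g i ∣ n := hg0 ▸ gcd_chain_dvd_of_le hg i.zero_le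
  have hn : (n : ℝ) ≠ 0 := NeZero.ne _
  have hd : (g i : ℝ) ≠ 0 := by exact_mod_cast ne_zero_of_dvd_ne_zero (NeZero.ne n) hdn
  have hSH : ∀ v, v ∈ S ↔ v - u₀ ∈ AddSubgroup.zmultiples (g i : ZMod n) := fun v => by
    rw [hS, Set.mem_ofPred_eq, SimpleGraph.circulantGraph_reachable_iff, closure_gcd_chain hg0 hg]
  have hcard : (S.ncard : ℝ) = n / g i := by
    rw [ncard_eq_nat_card_of_mem_iff_sub_mem hSH, ZMod.nat_card_zmultiples_natCast hdn,
      Nat.cast_div hdn hd]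
  have hinv := ZMod.apply_add_add_of_forall_min_val hφ.surjOn hx
  have hweight : ∀ z : ZMod n, z ≠ 0 → ∀ j ∈ Set.Icc 1 (n / 2), φ j = z.valMinAbs.natAbs →
      x s(0, z) = stepWeight n ℓ g j * if 2 * φ j = n then 2 else 1 := fun z hz j hj hφj =>
    hx 0 z hz.symm j hj.1 hj.2 (by rw [zero_sub, sub_zero, ZMod.min_val_neg_val_s11, hφj])
  constructor
  · have h := two_smul_sum_sym2_filter_forall_mem_eq_ncard_smul hinv hSH
    rw [ZMod.sum_mem_zmultiples_ne_zero hdn hφ hweight, sum_stepWeight_filter_dvd hg0 hg hstrict hi,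
      nsmul_eq_mul, nsmul_eq_mul, hcard, Nat.cast_ofNat] at h
    rw [hcard]
    field_simp at h ⊢
    linarith
  · rw [sum_sym2_filter_exists_mem_not_mem_eq_ncard_smul hinv hSH,
      ZMod.sum_not_mem_zmultiples hdn hφ hweight, sum_stepWeight_filter_not_dvd hg0 hg hstrict hi,
      nsmul_eq_mul, hcard]
    field_simp

open scoped Classical in
/-- With the explicit subtour-LP solution `x` (strictly decreasing `g`-sequence), every
connected component `S` of the circulant graph `C⟨{φ(1),...,φ(i)}⟩`, `0 ≤ i ≤ ℓ−1`,
satisfies `x(E(S)) = |S| − 1` and `x(δ(S)) = 2`. -/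
theorem stmt_11 (n : ℕ) (hn : 3 ≤ n) [NeZero n] (φ : ℕ → ℕ)
    (hφ : Set.BijOn φ (Set.Icc 1 (n / 2)) (Set.Icc 1 (n / 2)))
    (g : ℕ → ℕ) (hg0 : g 0 = n)
    (hg : ∀ i, 1 ≤ i → g i = Nat.gcd (g (i - 1)) (φ i))
    (ℓ : ℕ) (hℓ1 : g ℓ = 1) (hℓmin : ∀ i < ℓ, g i ≠ 1)
    (hstrict : ∀ m, 1 ≤ m → m ≤ ℓ → g m < g (m - 1))
    (x : Sym2 (ZMod n) → ℝ)
    (hx : ∀ u v : ZMod n, u ≠ v → ∀ i, 1 ≤ i → i ≤ n / 2 →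
      φ i = min (u - v).val (v - u).val →
      x s(u, v) = (if i < ℓ then ((g (i - 1) : ℝ) - g i) / n
          else if i = ℓ then (g (i - 1) : ℝ) / n else 0) *
        (if 2 * φ i = n then 2 else 1))
    (i : ℕ) (hi : i < ℓ) (u₀ : ZMod n) (S : Set (ZMod n))
    (hS : S = {v : ZMod n | (SimpleGraph.circulantGraph
        {z : ZMod n | ∃ j, 1 ≤ j ∧ j ≤ i ∧ z = (φ j : ZMod n)}).Reachable u₀ v}) :
    (∑ e ∈ Finset.univ.filter
        (fun e : Sym2 (ZMod n) => ¬ e.IsDiag ∧ ∀ v ∈ e, v ∈ S), x e)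
      = (S.ncard : ℝ) - 1 ∧
    (∑ e ∈ Finset.univ.filter
        (fun e : Sym2 (ZMod n) => ∃ a b : ZMod n, e = s(a, b) ∧ a ∈ S ∧ b ∉ S), x e)
      = 2 :=
  stmt_11_general n φ hφ g hg0 hg ℓ hstrict x hx i hi u₀ S hS
end

section
/- Let n = 4s with s > 1 integer. Define edge weights x on K_n (vertices Z_n) by x_e = 1/2 for every edge of length 1 and x_e = 1 for every edge of length n/2, and x_e = 0 otherwise. Define crown coefficients α(e) = 4s − 6 + j for an edge of length j < n/2 and α(e) = 2(s−1) for an edge of length n/2. Then Σ_e α(e)·x_e = 12s² − 14s, which is strictly less than the crown inequality right-hand side 12s(s−1) − 2 = 12s² − 12s − 2. -/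
/-!
The product `α e * x e` depends only on the length of `e` and vanishes unless that length is
`1` or `n/2`, so the sum is `(4s - 5)/2` times the number of edges of length `1` plus `2(s - 1)`
times the number of edges of length `n/2`. The edges of length `j` form the circulant graph on
`ZMod n` with jumps `±j`, which is `2`-regular for `2j < n` and `1`-regular for `2j = n`; the
handshake lemma then counts `n` and `n/2` such edges.
-/

open Finset SimpleGraph

namespace ZMod

def cyclicLength {n : ℕ} (d : ZMod n) : ℕ := min d.val (-d).val

variable {n : ℕ}

lemma cyclicLength_neg (d : ZMod n) : cyclicLength (-d) = cyclicLength d := by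
  rw [cyclicLength, cyclicLength, neg_neg, min_comm]

variable [NeZero n]

lemma cyclicLength_eq_iff {j : ℕ} (hj : 0 < j) (hjn : 2 * j ≤ n) {d : ZMod n} :
    cyclicLength d = j ↔ d = j ∨ d = -j := by
  have hjval : (j : ZMod n).val = j := val_cast_of_lt (by omega)
  rw [← neg_eq_iff_eq_neg, ← (val_injective n).eq_iff, ← (val_injective n).eq_iff, hjval,
    cyclicLength, neg_val]
  split_ifs with hd
  · rw [hd, val_zero]; omega
  · have := d.val_lt; omega

lemma filter_cyclicLength_eq {j : ℕ} (hj : 0 < j) (hjn : 2 * j ≤ n) :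
    ({d | cyclicLength d = j} : Finset (ZMod n)) = {(j : ZMod n), -(j : ZMod n)} := by
  ext d
  simp [cyclicLength_eq_iff hj hjn]

lemma card_filter_cyclicLength_eq_of_two_mul_lt {j : ℕ} (hj : 0 < j) (hjn : 2 * j < n) :
    #({d | cyclicLength d = j} : Finset (ZMod n)) = 2 := by
  rw [filter_cyclicLength_eq hj hjn.le, card_pair]
  rw [Ne, eq_neg_iff_add_eq_zero, ← Nat.cast_add, natCast_eq_zero_iff]
  exact fun h => (Nat.le_of_dvd (by omega) h).not_gt (by omega)

lemma card_filter_cyclicLength_eq_of_eq_two_mul {j : ℕ} (hj : 0 < j) (hn : n = 2 * j) :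
    #({d | cyclicLength d = j} : Finset (ZMod n)) = 1 := by
  have : -(j : ZMod n) = j := by
    rw [neg_eq_iff_add_eq_zero, ← Nat.cast_add, natCast_eq_zero_iff]; exact ⟨1, by omega⟩
  rw [filter_cyclicLength_eq hj hn.ge, this, pair_eq_singleton, card_singleton]

end ZMod

section Circulant

variable {G : Type*} [AddCommGroup G]

lemma circulantGraph_adj_iff_of_neg_mem {s : Finset G} (hs0 : 0 ∉ s) (hneg : ∀ d ∈ s, -d ∈ s)
    {u v : G} : (circulantGraph (s : Set G)).Adj u v ↔ u - v ∈ s := by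
  rw [circulantGraph_adj, mem_coe, mem_coe]
  constructor
  · rintro ⟨-, h | h⟩
    · exact h
    · simpa using hneg _ h
  · intro h
    exact ⟨fun huv => hs0 (by rwa [huv, sub_self] at h), Or.inl h⟩

variable [Fintype G] [DecidableEq G]

lemma circulantGraph_isRegularOfDegree {s : Finset G} (hs0 : 0 ∉ s) (hneg : ∀ d ∈ s, -d ∈ s) :
    (circulantGraph (s : Set G)).IsRegularOfDegree #s := by
  intro v
  rw [← card_neighborFinset_eq_degree]
  have hmem {w : G} : w ∈ (circulantGraph (s : Set G)).neighborFinset v ↔ v - w ∈ s := by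
    rw [mem_neighborFinset, circulantGraph_adj_iff_of_neg_mem hs0 hneg]
  refine card_nbij' (v - ·) (v - ·) (fun w hw => hmem.1 hw) (fun d hd => ?_)
    (fun w _ => sub_sub_cancel v w) (fun d _ => sub_sub_cancel v d)
  rw [mem_coe, hmem, sub_sub_cancel]
  exact hd

lemma two_mul_card_edgeFinset_circulantGraph {s : Finset G} (hs0 : 0 ∉ s)
    (hneg : ∀ d ∈ s, -d ∈ s) :
    2 * #(circulantGraph (s : Set G)).edgeFinset = Fintype.card G * #s := by
  rw [← sum_degrees_eq_twice_card_edges, ← card_univ]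
  exact sum_const_nat fun v _ => (circulantGraph_isRegularOfDegree hs0 hneg).degree_eq v

lemma two_mul_card_filter_sym2_eq {ℓ : G → ℕ} (hℓ : ∀ d, ℓ (-d) = ℓ d) {j : ℕ} (hj : ℓ 0 ≠ j)
    {len : Sym2 G → ℕ} (hlen : ∀ u v, len s(u, v) = ℓ (u - v)) :
    2 * #({e | len e = j} : Finset (Sym2 G)) = Fintype.card G * #({d | ℓ d = j} : Finset G) := by
  have hs0 : (0 : G) ∉ ({d | ℓ d = j} : Finset G) := by simpa using hj
  have hneg : ∀ d ∈ ({d | ℓ d = j} : Finset G), -d ∈ ({d | ℓ d = j} : Finset G) := by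
    simp [hℓ]
  rw [← two_mul_card_edgeFinset_circulantGraph hs0 hneg]
  congr 2
  ext e
  induction e with
  | _ u v =>
    rw [mem_filter, mem_edgeFinset, mem_edgeSet, circulantGraph_adj_iff_of_neg_mem hs0 hneg, hlen]
    simp

end Circulant

/-- For `n = 4s`, `s > 1`, the subtour-LP solution putting weight `1/2` on every edge of
length `1` and weight `1` on every edge of length `n/2` violates the crown inequality:
`Σ_e α(e)·x_e = 12s² − 14s < 12s(s−1) − 2`, where `α(e) = 4s − 6 + j` for an edge of
length `j < n/2` and `α(e) = 2(s−1)` for an edge of length `n/2`. -/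
theorem stmt_14 (s : ℕ) (hs : 1 < s) (n : ℕ) [NeZero n] (hn : n = 4 * s)
    (len : Sym2 (ZMod n) → ℕ)
    (hlen : ∀ u v : ZMod n, len s(u, v) = min (u - v).val (v - u).val)
    (x α : Sym2 (ZMod n) → ℝ)
    (hx : ∀ e, x e = if len e = 1 then 1 / 2 else if len e = n / 2 then 1 else 0)
    (hα : ∀ e, α e = if len e = n / 2 then 2 * ((s : ℝ) - 1)
        else 4 * (s : ℝ) - 6 + len e) :
    (∑ e : Sym2 (ZMod n), α e * x e) = 12 * (s : ℝ) ^ 2 - 14 * s ∧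
    12 * (s : ℝ) ^ 2 - 14 * s < 12 * (s : ℝ) * ((s : ℝ) - 1) - 2 := by
  subst hn
  have hhalf : 4 * s / 2 = 2 * s := by omega
  have hlen' (u v : ZMod (4 * s)) : len s(u, v) = ZMod.cyclicLength (u - v) := by
    rw [hlen, ZMod.cyclicLength, neg_sub]
  have hcount {j : ℕ} (hj : 0 < j) :
      2 * #({e | len e = j} : Finset _) =
        4 * s * #({d | ZMod.cyclicLength d = j} : Finset (ZMod (4 * s))) := by
    rw [two_mul_card_filter_sym2_eq ZMod.cyclicLength_neg _ hlen', ZMod.card]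
    simpa [ZMod.cyclicLength] using hj.ne
  have hcard₁ : #({e | len e = 1} : Finset _) = 4 * s := by
    have h := hcount one_pos
    rw [ZMod.card_filter_cyclicLength_eq_of_two_mul_lt one_pos (by omega)] at h
    omega
  have hcard₂ : #({e | len e = 2 * s} : Finset _) = 2 * s := by
    have h := hcount (j := 2 * s) (by omega)
    rw [ZMod.card_filter_cyclicLength_eq_of_eq_two_mul (by omega) (by omega)] at h
    omega
  have hweight (e : Sym2 (ZMod (4 * s))) : α e * x e =
      (if len e = 1 then (4 * (s : ℝ) - 5) / 2 else 0) +
        (if len e = 2 * s then 2 * ((s : ℝ) - 1) else 0) := by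
    rw [hα, hx, hhalf]
    split_ifs <;> first | omega | (push_cast [*]; ring)
  have hs' : (2 : ℝ) ≤ s := by exact_mod_cast hs
  refine ⟨?_, by nlinarith⟩
  simp only [hweight, sum_add_distrib, sum_ite, sum_const_zero, add_zero, sum_const,
    nsmul_eq_mul, hcard₁, hcard₂]
  push_cast
  ring
end
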